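/- Fix a prime p, integers n ≥ 1 and b. The number of pairs (k, a) of integers with 0 ≤ a ≤ r(n-1) and b = p^n k + a(p-1), plus the number of triples (j, k, a) with 0 ≤ j ≤ n-2, 1 ≤ a ≤ r(j+1), p ∤ k, and b = p^{j+1} k + a(p-1), equals n if b ≡ 0 (mod p^n) and n-1 otherwise. Here r(m) = Σ_{k=1}^{m} p^k. -/

import Mathlib

/-!
Since `p - 1` is a unit modulo `p ^ k`, the `a` with `p ^ k ∣ b - a (p - 1)` form one residue class
modulo `p ^ k`, and a solution `(k, a)` is determined by `a`. So the first set counts the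
`0 ≤ a ≤ r (n - 1)` in the class modulo `p ^ n`, and the `j`-th layer of the second set counts the
`0 < a ≤ r (j + 1)` in the class modulo `p ^ (j + 1)` but not in the one modulo `p ^ (j + 2)`.
The value `a = 0` contributes exactly when `p ^ n ∣ b`; the positive values telescope, because going
from `n` to `n + 1` merges the new layer with the new first term into the class modulo `p ^ n` on
`(0, r n]`, and the interval `(r (n - 1), r n]` of length `p ^ n` meets that class exactly once.
-/

open Finset

theorem IsCoprime.exists_dvd_sub_mul_iff_modEq {d Q : ℤ} (h : IsCoprime d Q) (b : ℤ) :
    ∃ c, ∀ a, Q ∣ b - a * d ↔ a ≡ c [ZMOD Q] := by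
  obtain ⟨u, v, huv⟩ := h
  refine ⟨b * u, fun a => ?_⟩
  rw [Int.modEq_iff_dvd]
  constructor
  · intro h
    have : b * u - a = (b - a * d) * u - Q * (a * v) := by linear_combination a * huv
    rw [this]
    exact dvd_sub (h.mul_right u) (dvd_mul_right _ _)
  · intro h
    have : b - a * d = (b * u - a) * d + Q * (b * v) := by linear_combination (-b) * huv
    rw [this]
    exact dvd_add (h.mul_right d) (dvd_mul_right _ _)

theorem IsCoprime.card_filter_Ioc_dvd_sub_mul {d Q : ℤ} (hQ : 0 < Q) (h : IsCoprime d Q)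
    (b x : ℤ) : #{a ∈ Ioc x (x + Q) | Q ∣ b - a * d} = 1 := by
  obtain ⟨c, hc⟩ := h.exists_dvd_sub_mul_iff_modEq b
  have hcard := Int.Ioc_filter_modEq_card x (x + Q) hQ c
  have hshift : ((x + Q : ℤ) - c : ℚ) / Q = (x - c : ℚ) / Q + 1 := by
    have : (Q : ℚ) ≠ 0 := by exact_mod_cast hQ.ne'
    field_simp
    push_cast
    ring
  simp only [← filter_congr fun a _ => hc a] at hcard
  rw [hshift, Int.floor_add_one] at hcard
  omega

theorem isCoprime_sub_one_pow (q : ℤ) (k : ℕ) : IsCoprime (q - 1) (q ^ k) :=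
  IsCoprime.pow_right ⟨-1, 1, by ring⟩

theorem card_filter_add_card_filter_and_not {α : Type*} (s : Finset α) {P Q : α → Prop}
    [DecidablePred P] [DecidablePred Q] (h : ∀ a ∈ s, P a → Q a) :
    #{a ∈ s | P a} + #{a ∈ s | Q a ∧ ¬ P a} = #{a ∈ s | Q a} := by
  rw [← card_filter_add_card_filter_not (s := s.filter Q) P, filter_filter, filter_filter]
  congr 2
  exact filter_congr fun a ha => ⟨fun hp => ⟨h a ha hp, hp⟩, And.right⟩

theorem card_filter_Icc_zero {P : ℤ → Prop} [DecidablePred P] {R : ℤ} (hR : 0 ≤ R) :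
    #{a ∈ Icc 0 R | P a} = #{a ∈ Ioc 0 R | P a} + if P 0 then 1 else 0 := by
  rw [Icc_eq_cons_Ioc hR, filter_cons]
  split_ifs <;> simp

theorem exists_not_dvd_and_eq_pow_mul_add_iff {q : ℤ} (hq : q ≠ 0) (m : ℕ) (b c : ℤ) :
    (∃ k, ¬ q ∣ k ∧ b = q ^ m * k + c) ↔ q ^ m ∣ b - c ∧ ¬ q ^ (m + 1) ∣ b - c := by
  have hdvd (k : ℤ) : q ^ (m + 1) ∣ q ^ m * k ↔ q ∣ k := by
    rw [pow_succ, mul_dvd_mul_iff_left (pow_ne_zero m hq)]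
  constructor
  · rintro ⟨k, hk, rfl⟩
    rw [add_sub_cancel_right, hdvd]
    exact ⟨dvd_mul_right _ _, hk⟩
  · rintro ⟨⟨k, hk⟩, hk'⟩
    rw [hk, hdvd] at hk'
    exact ⟨k, hk', by linarith⟩

theorem ncard_eq_mul_add {Q : ℤ} (hQ : Q ≠ 0) (d b lo hi : ℤ) :
    {ka : ℤ × ℤ | lo ≤ ka.2 ∧ ka.2 ≤ hi ∧ b = Q * ka.1 + ka.2 * d}.ncard
      = #{a ∈ Icc lo hi | Q ∣ b - a * d} := by
  have hinj : Set.InjOn Prod.snd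
      {ka : ℤ × ℤ | lo ≤ ka.2 ∧ ka.2 ≤ hi ∧ b = Q * ka.1 + ka.2 * d} := by
    rintro ⟨k, a⟩ ⟨-, -, h⟩ ⟨k', a'⟩ ⟨-, -, h'⟩ (rfl : a = a')
    simp only [Prod.mk.injEq, and_true]
    exact mul_left_cancel₀ hQ (by linarith)
  rw [← hinj.ncard_image, ← Set.ncard_coe_finset]
  congr 1
  ext a
  simp only [Set.mem_image, Set.mem_ofPred_eq, Prod.exists, exists_eq_right, coe_filter, mem_Icc]
  constructor
  · rintro ⟨k, hlo, hhi, rfl⟩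
    exact ⟨⟨hlo, hhi⟩, k, by ring⟩
  · rintro ⟨⟨hlo, hhi⟩, k, hk⟩
    exact ⟨k, hlo, hhi, by linarith⟩

theorem ncard_eq_pow_mul_add_not_dvd {q : ℤ} (hq : q ≠ 0) (d b : ℤ) (n : ℕ) (R : ℕ → ℤ) :
    {jka : ℕ × ℤ × ℤ | jka.1 + 2 ≤ n ∧ 1 ≤ jka.2.2 ∧ jka.2.2 ≤ R jka.1 ∧ ¬ q ∣ jka.2.1 ∧
        b = q ^ (jka.1 + 1) * jka.2.1 + jka.2.2 * d}.ncard
      = ∑ j ∈ range (n - 1),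
          #{a ∈ Ioc 0 (R j) | q ^ (j + 1) ∣ b - a * d ∧ ¬ q ^ (j + 1 + 1) ∣ b - a * d} := by
  have hinj : Set.InjOn (fun jka : ℕ × ℤ × ℤ => (⟨jka.1, jka.2.2⟩ : Σ _ : ℕ, ℤ))
      {jka : ℕ × ℤ × ℤ | jka.1 + 2 ≤ n ∧ 1 ≤ jka.2.2 ∧ jka.2.2 ≤ R jka.1 ∧ ¬ q ∣ jka.2.1 ∧
        b = q ^ (jka.1 + 1) * jka.2.1 + jka.2.2 * d} := by
    rintro ⟨j, k, a⟩ ⟨-, -, -, -, h⟩ ⟨j', k', a'⟩ ⟨-, -, -, -, h'⟩ hja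
    simp only [Sigma.mk.injEq, heq_eq_eq] at hja
    obtain ⟨rfl, rfl⟩ := hja
    simp only [Prod.mk.injEq, true_and, and_true]
    exact mul_left_cancel₀ (pow_ne_zero _ hq) (by linarith)
  rw [← card_sigma, ← hinj.ncard_image, ← Set.ncard_coe_finset]
  congr 1
  ext ⟨j, a⟩
  simp only [Set.mem_image, Set.mem_ofPred_eq, Prod.exists, Sigma.mk.injEq, heq_eq_eq, coe_sigma,
    Set.mem_sigma_iff, mem_coe, mem_range, mem_filter, mem_Ioc]
  constructor
  · rintro ⟨j, k, a, ⟨hj, ha, haR, hk, hb⟩, rfl, rfl⟩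
    exact ⟨by omega, ⟨by omega, haR⟩,
      (exists_not_dvd_and_eq_pow_mul_add_iff hq _ _ _).1 ⟨k, hk, hb⟩⟩
  · rintro ⟨hj, ⟨ha, haR⟩, hdvd⟩
    obtain ⟨k, hk, hb⟩ := (exists_not_dvd_and_eq_pow_mul_add_iff hq _ _ _).2 hdvd
    exact ⟨j, k, a, ⟨by omega, by omega, haR, hk, hb⟩, rfl, rfl⟩

section

variable {q : ℤ} (b : ℤ)

theorem card_filter_Ioc_add_pow_dvd (hq : 0 < q) {R : ℤ} (hR : 0 ≤ R) (k : ℕ) :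
    #{a ∈ Ioc 0 (R + q ^ k) | q ^ k ∣ b - a * (q - 1)}
      = #{a ∈ Ioc 0 R | q ^ k ∣ b - a * (q - 1)} + 1 := by
  have hqk : 0 < q ^ k := pow_pos hq k
  rw [← Ioc_union_Ioc_eq_Ioc hR (by linarith), filter_union,
    card_union_of_disjoint (disjoint_filter_filter (Ioc_disjoint_Ioc_of_le le_rfl)),
    (isCoprime_sub_one_pow q k).card_filter_Ioc_dvd_sub_mul hqk]

theorem card_filter_Ioc_pow_dvd_add_sum (hq : 0 < q) (r : ℕ → ℤ)
    (hr : ∀ m, r m = ∑ k ∈ Icc 1 m, q ^ k) (m : ℕ) :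
    #{a ∈ Ioc 0 (r m) | q ^ (m + 1) ∣ b - a * (q - 1)} +
      ∑ j ∈ range m, #{a ∈ Ioc 0 (r (j + 1)) |
        q ^ (j + 1) ∣ b - a * (q - 1) ∧ ¬ q ^ (j + 1 + 1) ∣ b - a * (q - 1)} = m := by
  induction m with
  | zero => simp [hr]
  | succ m ih =>
    have hr_succ : r (m + 1) = r m + q ^ (m + 1) := by rw [hr, hr, sum_Icc_succ_top (by omega)]
    have hr_nonneg : 0 ≤ r m := by rw [hr]; positivity
    have hsplit := card_filter_add_card_filter_and_not (Ioc 0 (r (m + 1)))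
      (P := fun a => q ^ (m + 1 + 1) ∣ b - a * (q - 1))
      (Q := fun a => q ^ (m + 1) ∣ b - a * (q - 1))
      fun a _ => (pow_dvd_pow q (Nat.le_succ _)).trans
    have hstep : #{a ∈ Ioc 0 (r (m + 1)) | q ^ (m + 1) ∣ b - a * (q - 1)}
        = #{a ∈ Ioc 0 (r m) | q ^ (m + 1) ∣ b - a * (q - 1)} + 1 := by
      rw [hr_succ, card_filter_Ioc_add_pow_dvd b hq hr_nonneg]
    rw [sum_range_succ]
    omega

end

/-- Counting the solutions of `b = p^n k + a(p-1)` with `0 ≤ a ≤ r(n-1)` together with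
the solutions of `b = p^{j+1} k + a(p-1)` with `0 ≤ j ≤ n-2`, `1 ≤ a ≤ r(j+1)`, `p ∤ k`:
the total is `n` if `p^n ∣ b` and `n - 1` otherwise.  Here `r m = ∑_{k=1}^m p^k`. -/
theorem stmt_3 (p : ℕ) (hp : p.Prime) (n : ℕ) (hn : 1 ≤ n) (b : ℤ)
    (r : ℕ → ℤ) (hr : ∀ m, r m = ∑ k ∈ Finset.Icc 1 m, (p : ℤ) ^ k) :
    ({ka : ℤ × ℤ | 0 ≤ ka.2 ∧ ka.2 ≤ r (n - 1) ∧
        b = (p : ℤ) ^ n * ka.1 + ka.2 * ((p : ℤ) - 1)}).ncard +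
    ({jka : ℕ × ℤ × ℤ | jka.1 + 2 ≤ n ∧ 1 ≤ jka.2.2 ∧ jka.2.2 ≤ r (jka.1 + 1) ∧
        ¬ ((p : ℤ) ∣ jka.2.1) ∧
        b = (p : ℤ) ^ (jka.1 + 1) * jka.2.1 + jka.2.2 * ((p : ℤ) - 1)}).ncard
      = if (p : ℤ) ^ n ∣ b then n else n - 1 := by
  obtain ⟨m, rfl⟩ : ∃ m, n = m + 1 := ⟨n - 1, by omega⟩
  have hp_pos : (0 : ℤ) < p := by exact_mod_cast hp.pos
  have hr_nonneg : 0 ≤ r m := by rw [hr]; positivity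
  have hcount := card_filter_Ioc_pow_dvd_add_sum b hp_pos r hr m
  rw [Nat.add_sub_cancel, ncard_eq_mul_add (pow_ne_zero _ hp_pos.ne'),
    ncard_eq_pow_mul_add_not_dvd hp_pos.ne' _ _ _ (fun j => r (j + 1)), Nat.add_sub_cancel,
    card_filter_Icc_zero hr_nonneg, zero_mul, sub_zero]
  split_ifs <;> omega
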